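/- Let L = I − M be the normalized Laplacian of a d-regular, undirected, 1/2-lazy multigraph G, and let ε = ln(1/(1−λ)) for λ ∈ [0,1). Then L ≈_ε I − J if and only if λ(G) ≤ λ. -/

import Mathlib

/-!
Both `I - M` and `I - J` annihilate the constant vectors, and `I - J` is the identity on their
orthogonal complement `𝟙ᗮ`, so `I - M ≈_ε I - J` says `(1 - λ) I ⪯ I - M ⪯ (1 - λ)⁻¹ I` on `𝟙ᗮ`.
The lower bound always holds because the lazy walk matrix `M = (T + I) / 2` is positive
semidefinite, and the upper bound says `⟪v, M v⟫ ≤ λ ‖v‖²` on `𝟙ᗮ`. Since `M` is positive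
semidefinite and preserves `𝟙ᗮ`, this is equivalent to `‖M v‖ ≤ λ ‖v‖` there: apply
Cauchy–Schwarz for the semi-inner product `⟪x, M y⟫` to `v` and `M v`, using
`⟪v, M (M v)⟫ = ‖M v‖²`.
-/

open Matrix

namespace Matrix

variable {ι : Type*} [Fintype ι]

theorem IsSymm.dotProduct_mulVec_comm {A : Matrix ι ι ℝ} (hA : A.IsSymm) (x y : ι → ℝ) :
    x ⬝ᵥ A *ᵥ y = y ⬝ᵥ A *ᵥ x := by
  rw [dotProduct_mulVec, ← mulVec_transpose, hA.eq, dotProduct_comm]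

theorem PosSemidef.dotProduct_mulVec_sq_le {A : Matrix ι ι ℝ} (hA : A.PosSemidef) (x y : ι → ℝ) :
    (x ⬝ᵥ A *ᵥ y) ^ 2 ≤ (x ⬝ᵥ A *ᵥ x) * (y ⬝ᵥ A *ᵥ y) := by
  have hsymm : x ⬝ᵥ A *ᵥ y = y ⬝ᵥ A *ᵥ x :=
    (isHermitian_iff_isSymm.mp hA.isHermitian).dotProduct_mulVec_comm x y
  have hquad (t : ℝ) :
      0 ≤ (x ⬝ᵥ A *ᵥ x) * (t * t) + 2 * (x ⬝ᵥ A *ᵥ y) * t + y ⬝ᵥ A *ᵥ y := by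
    have h := hA.dotProduct_mulVec_nonneg (t • x + y)
    simp only [star_trivial, mulVec_add, mulVec_smul, dotProduct_add, add_dotProduct,
      dotProduct_smul, smul_dotProduct, smul_eq_mul, ← hsymm] at h
    linarith
  have hdiscr := discrim_le_zero hquad
  rw [discrim] at hdiscr
  linarith

theorem dotProduct_sq_le (x y : ι → ℝ) : (x ⬝ᵥ y) ^ 2 ≤ (x ⬝ᵥ x) * (y ⬝ᵥ y) := by
  classical
  simpa only [one_mulVec] using (PosSemidef.one (n := ι) (R := ℝ)).dotProduct_mulVec_sq_le x y

theorem PosSemidef.forall_mulVec_dotProduct_le_iff {A : Matrix ι ι ℝ} (hA : A.PosSemidef)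
    {S : Set (ι → ℝ)} (hS : ∀ v ∈ S, A *ᵥ v ∈ S) {r : ℝ} (hr : 0 ≤ r) :
    (∀ v ∈ S, (A *ᵥ v) ⬝ᵥ (A *ᵥ v) ≤ r ^ 2 * (v ⬝ᵥ v)) ↔
      ∀ v ∈ S, v ⬝ᵥ A *ᵥ v ≤ r * (v ⬝ᵥ v) := by
  have hself (w : ι → ℝ) : 0 ≤ w ⬝ᵥ w := dotProduct_self_star_nonneg w
  constructor
  · intro h v hv
    have hsq : (v ⬝ᵥ A *ᵥ v) ^ 2 ≤ (r * (v ⬝ᵥ v)) ^ 2 :=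
      calc (v ⬝ᵥ A *ᵥ v) ^ 2 ≤ (v ⬝ᵥ v) * ((A *ᵥ v) ⬝ᵥ (A *ᵥ v)) := dotProduct_sq_le _ _
        _ ≤ (v ⬝ᵥ v) * (r ^ 2 * (v ⬝ᵥ v)) := mul_le_mul_of_nonneg_left (h v hv) (hself v)
        _ = (r * (v ⬝ᵥ v)) ^ 2 := by ring
    exact le_of_abs_le (abs_le_of_sq_le_sq hsq (mul_nonneg hr (hself v)))
  · intro h v hv
    set u := A *ᵥ v
    have hu : u ⬝ᵥ u = v ⬝ᵥ A *ᵥ u :=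
      (isHermitian_iff_isSymm.mp hA.isHermitian).dotProduct_mulVec_comm u v
    have key : (u ⬝ᵥ u) * (u ⬝ᵥ u) ≤ (r ^ 2 * (v ⬝ᵥ v)) * (u ⬝ᵥ u) :=
      calc (u ⬝ᵥ u) * (u ⬝ᵥ u) = (v ⬝ᵥ A *ᵥ u) ^ 2 := by rw [hu]; ring
        _ ≤ (v ⬝ᵥ A *ᵥ v) * (u ⬝ᵥ A *ᵥ u) := hA.dotProduct_mulVec_sq_le v u
        _ ≤ (r * (v ⬝ᵥ v)) * (r * (u ⬝ᵥ u)) :=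
          mul_le_mul (h v hv) (h u (hS v hv)) (hA.dotProduct_mulVec_nonneg u)
            (mul_nonneg hr (hself v))
        _ = (r ^ 2 * (v ⬝ᵥ v)) * (u ⬝ᵥ u) := by ring
    rcases (hself u).eq_or_lt with hu0 | hupos
    · rw [← hu0]; exact mul_nonneg (sq_nonneg r) (hself v)
    · exact le_of_mul_le_mul_right key hupos

theorem IsSymm.dotProduct_mulVec_add_const_smul_one {B : Matrix ι ι ℝ} (hB : B.IsSymm)
    (h1 : B *ᵥ 1 = 0) (w : ι → ℝ) (c : ℝ) :
    (w + c • 1) ⬝ᵥ B *ᵥ (w + c • 1) = w ⬝ᵥ B *ᵥ w := by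
  have h1w : 1 ⬝ᵥ B *ᵥ w = 0 := by rw [hB.dotProduct_mulVec_comm, h1, dotProduct_zero]
  rw [mulVec_add, mulVec_smul, h1, smul_zero, add_zero, add_dotProduct, smul_dotProduct, h1w,
    smul_zero, add_zero]

theorem IsSymm.posSemidef_iff_of_mulVec_one_eq_zero {B : Matrix ι ι ℝ} (hB : B.IsSymm)
    (h1 : B *ᵥ 1 = 0) : B.PosSemidef ↔ ∀ w : ι → ℝ, ∑ i, w i = 0 → 0 ≤ w ⬝ᵥ B *ᵥ w := by
  refine ⟨fun hpsd w _ => hpsd.dotProduct_mulVec_nonneg w, fun h => ?_⟩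
  refine .of_dotProduct_mulVec_nonneg (isHermitian_iff_isSymm.mpr hB) fun x => ?_
  rcases isEmpty_or_nonempty ι with hι | hι
  · simp [dotProduct]
  set c := (∑ i, x i) / Fintype.card ι
  have hcentered : ∑ i, (x - c • 1) i = 0 := by
    have hcard : (Fintype.card ι : ℝ) ≠ 0 := Nat.cast_ne_zero.mpr Fintype.card_ne_zero
    simp [c, Finset.sum_sub_distrib, mul_div_cancel₀, hcard]
  rw [star_trivial, ← sub_add_cancel x (c • 1), hB.dotProduct_mulVec_add_const_smul_one h1]
  exact h _ hcentered

noncomputable def averaging (ι : Type*) [Fintype ι] : Matrix ι ι ℝ := fun _ _ => 1 / Fintype.card ι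

theorem averaging_mulVec (v : ι → ℝ) :
    averaging ι *ᵥ v = fun _ => (∑ i, v i) / Fintype.card ι := by
  funext
  simp [averaging, mulVec, dotProduct, Finset.mul_sum, div_eq_inv_mul]

section DecidableEq

variable [DecidableEq ι]

theorem sum_mul_add_sq_eq_of_mem_doublyStochastic {T : Matrix ι ι ℝ}
    (hT : T ∈ doublyStochastic ℝ ι) (x : ι → ℝ) :
    ∑ i, ∑ j, T i j * (x i + x j) ^ 2 = 2 * (x ⬝ᵥ (T + 1) *ᵥ x) := by
  have hrow : ∑ i, ∑ j, T i j * x i ^ 2 = x ⬝ᵥ x := by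
    simp only [← Finset.sum_mul, sum_row_of_mem_doublyStochastic hT, one_mul, dotProduct, sq]
  have hcol : ∑ i, ∑ j, T i j * x j ^ 2 = x ⬝ᵥ x := by
    rw [Finset.sum_comm]
    simp only [← Finset.sum_mul, sum_col_of_mem_doublyStochastic hT, one_mul, dotProduct, sq]
  have hcross : ∑ i, ∑ j, T i j * (2 * x i * x j) = 2 * (x ⬝ᵥ T *ᵥ x) := by
    simp only [dotProduct, mulVec, Finset.mul_sum]
    exact Finset.sum_congr rfl fun i _ => Finset.sum_congr rfl fun j _ => by ring
  simp only [add_sq, mul_add, Finset.sum_add_distrib, hrow, hcol, hcross, add_mulVec,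
    one_mulVec, dotProduct_add]
  ring

theorem IsSymm.posSemidef_add_one_of_mem_doublyStochastic {T : Matrix ι ι ℝ} (hTsymm : T.IsSymm)
    (hT : T ∈ doublyStochastic ℝ ι) : (T + 1).PosSemidef := by
  refine .of_dotProduct_mulVec_nonneg (isHermitian_iff_isSymm.mpr (hTsymm.add isSymm_one))
    fun x => ?_
  have hsum := sum_mul_add_sq_eq_of_mem_doublyStochastic hT x
  have hnonneg : 0 ≤ ∑ i, ∑ j, T i j * (x i + x j) ^ 2 :=
    Finset.sum_nonneg fun i _ => Finset.sum_nonneg fun j _ =>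
      mul_nonneg (nonneg_of_mem_doublyStochastic hT) (sq_nonneg _)
  rw [star_trivial]
  linarith

theorem half_smul_add_one_mem_doublyStochastic {T : Matrix ι ι ℝ}
    (hT : T ∈ doublyStochastic ℝ ι) : (1 / 2 : ℝ) • (T + 1) ∈ doublyStochastic ℝ ι := by
  rw [smul_add]
  exact convex_doublyStochastic hT (one_mem _) (by norm_num) (by norm_num) (by norm_num)

theorem isSymm_one_sub_averaging : (1 - averaging ι).IsSymm :=
  isSymm_one.sub (IsSymm.ext fun _ _ => rfl)

theorem dotProduct_one_sub_averaging_mulVec {w : ι → ℝ} (hw : ∑ i, w i = 0) :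
    w ⬝ᵥ (1 - averaging ι) *ᵥ w = w ⬝ᵥ w := by
  simp [sub_mulVec, averaging_mulVec, hw]

variable [Nonempty ι]

theorem one_sub_averaging_mulVec_one : (1 - averaging ι) *ᵥ 1 = 0 := by
  rw [sub_mulVec, one_mulVec, averaging_mulVec]
  funext
  simp

theorem IsSymm.posSemidef_smul_add_smul_iff {M : Matrix ι ι ℝ} (hM : M.IsSymm)
    (hM1 : M *ᵥ 1 = 1) (a b : ℝ) :
    (a • (1 - M) + b • (1 - averaging ι)).PosSemidef ↔
      ∀ w : ι → ℝ, ∑ i, w i = 0 → 0 ≤ a * (w ⬝ᵥ w - w ⬝ᵥ M *ᵥ w) + b * (w ⬝ᵥ w) := by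
  have hsymm := ((isSymm_one.sub hM).smul a).add (isSymm_one_sub_averaging (ι := ι).smul b)
  have hkills : (a • (1 - M) + b • (1 - averaging ι)) *ᵥ 1 = 0 := by
    rw [add_mulVec, smul_mulVec, smul_mulVec, one_sub_averaging_mulVec_one, sub_mulVec,
      one_mulVec, hM1, sub_self, smul_zero, smul_zero, add_zero]
  rw [hsymm.posSemidef_iff_of_mulVec_one_eq_zero hkills]
  refine forall₂_congr fun w hw => ?_
  rw [add_mulVec, smul_mulVec, smul_mulVec, dotProduct_add, dotProduct_smul, dotProduct_smul,
    smul_eq_mul, smul_eq_mul, dotProduct_one_sub_averaging_mulVec hw, sub_mulVec, one_mulVec,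
    dotProduct_sub]

end DecidableEq

end Matrix

/-- For a d-regular undirected 1/2-lazy multigraph G with transition matrix
M = (1/2)(T + I), and ε = ln(1/(1−λ)) with λ ∈ [0,1):
L ≈_ε I − J if and only if λ(G) ≤ λ. -/
theorem lazy_laplacian_approx_iff_eigenvalue_bound {n : ℕ} (hn : 0 < n)
    (M T : Matrix (Fin n) (Fin n) ℝ)
    (hTsym : Tᵀ = T) (hTnn : ∀ i j, 0 ≤ T i j) (hTrow : ∀ i, ∑ j, T i j = 1)
    (hM : M = (1 / 2 : ℝ) • (T + 1))
    (lam ε : ℝ) (hlam0 : 0 ≤ lam) (hlam1 : lam < 1)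
    (hε : ε = Real.log (1 / (1 - lam)))
    (J : Matrix (Fin n) (Fin n) ℝ) (hJ : J = fun _ _ => (1 : ℝ) / n) :
    (((1 - J) - Real.exp (-ε) • ((1 : Matrix (Fin n) (Fin n) ℝ) - M)).PosSemidef ∧
        (Real.exp ε • ((1 : Matrix (Fin n) (Fin n) ℝ) - M) - (1 - J)).PosSemidef)
      ↔ (∀ v : Fin n → ℝ, ∑ i, v i = 0 →
          (M *ᵥ v) ⬝ᵥ (M *ᵥ v) ≤ lam ^ 2 * (v ⬝ᵥ v)) := by
  have : Nonempty (Fin n) := ⟨⟨0, hn⟩⟩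
  have hgap : 0 < 1 - lam := by linarith
  have hexp : Real.exp ε = (1 - lam)⁻¹ := by rw [hε, Real.exp_log (one_div_pos.mpr hgap), one_div]
  have hTds : T ∈ doublyStochastic ℝ (Fin n) := mem_doublyStochastic_iff_sum.mpr
    ⟨hTnn, hTrow, fun j => by simpa only [IsSymm.apply hTsym] using hTrow j⟩
  have hMds : M ∈ doublyStochastic ℝ (Fin n) := hM ▸ half_smul_add_one_mem_doublyStochastic hTds
  have hMpsd : M.PosSemidef :=
    hM ▸ (IsSymm.posSemidef_add_one_of_mem_doublyStochastic hTsym hTds).smul (by norm_num)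
  have hMsymm : M.IsSymm := isHermitian_iff_isSymm.mp hMpsd.isHermitian
  have hM1 := mulVec_one_of_mem_doublyStochastic hMds
  obtain rfl : J = averaging (Fin n) := by ext; simp [hJ, averaging]
  rw [show 1 - averaging (Fin n) - Real.exp (-ε) • (1 - M) =
      (-Real.exp (-ε)) • (1 - M) + (1 : ℝ) • (1 - averaging (Fin n)) by module,
    show Real.exp ε • (1 - M) - (1 - averaging (Fin n)) =
      Real.exp ε • (1 - M) + (-1 : ℝ) • (1 - averaging (Fin n)) by module,
    hMsymm.posSemidef_smul_add_smul_iff hM1, hMsymm.posSemidef_smul_add_smul_iff hM1,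
    Real.exp_neg, hexp, inv_inv]
  refine (and_iff_right fun w _ => ?_).trans ((forall₂_congr fun w _ => ?_).trans
    (hMpsd.forall_mulVec_dotProduct_le_iff (S := {v | ∑ i, v i = 0})
      (fun v hv => (sum_mulVec_of_mem_doublyStochastic hMds).trans hv) hlam0).symm)
  · have hww : 0 ≤ w ⬝ᵥ w := dotProduct_self_star_nonneg w
    have hQ : 0 ≤ w ⬝ᵥ M *ᵥ w := by simpa using hMpsd.dotProduct_mulVec_nonneg w
    nlinarith [mul_nonneg hlam0 hww, mul_nonneg hgap.le hQ]
  · rw [neg_one_mul, ← sub_eq_add_neg, sub_nonneg, le_inv_mul_iff₀ hgap]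
    constructor <;> intro h <;> linarith
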